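/- arXiv:math/0512229 — 3 statements merged into one kernel-verified Lean document; each statement's English description precedes it below -/
import Mathlib

section
/- Let τ have positive imaginary part and define θ[a,0](kτ,0) = Σ_{n∈ℤ} exp(πikτ(n+a)²) for a ∈ ℝ, k a positive integer. Then the product of two such theta constants satisfies the addition identity θ[i/3,0](3τ,0)·θ[j/3,0](3τ,0) = Σ_{m∈{0,1}} θ[(i-j+3m)/6,0](6τ,0)·θ[(i+j+3m)/6,0](6τ,0) for i, j ∈ ℤ. -/
/-!
Writing `x = n₁ + a`, `y = n₂ + b`, the parallelogram law `w (x² + y²) = 2w ((x-y)/2)² + 2w ((x+y)/2)²`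
turns each term of the double series for `θ_a(w) θ_b(w)` into a term of a product of two theta
series at `2w`. The pairs `(n₁, n₂) = (q + p + ε, q - p)` with `ε ∈ {0, 1}` run through `ℤ × ℤ`
exactly once, and `ε` becomes the half-characteristic shift in the two factors at `2w`.
-/

open Complex Real

/-- The theta constant `θ[a,0](kτ,0) = Σ_{n∈ℤ} exp(πikτ(n+a)²)`. -/
noncomputable def thetaConst (τ : ℂ) (a : ℝ) (k : ℕ) : ℂ :=
  ∑' n : ℤ, Complex.exp ((π : ℂ) * Complex.I * (k : ℂ) * τ * ((n : ℂ) + (a : ℂ)) ^ 2)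

noncomputable def thetaTerm (w : ℂ) (a : ℝ) (n : ℤ) : ℂ :=
  cexp (π * I * w * ((n : ℂ) + a) ^ 2)

lemma thetaConst_eq_tsum_thetaTerm (τ : ℂ) (a : ℝ) (k : ℕ) :
    thetaConst τ a k = ∑' n : ℤ, thetaTerm (k * τ) a n := by
  simp only [thetaConst, thetaTerm, mul_assoc]

lemma thetaTerm_eq_jacobiTheta₂_term_mul (w : ℂ) (a : ℝ) (n : ℤ) :
    thetaTerm w a n = jacobiTheta₂_term n (w * a) w * cexp (π * I * w * (a : ℂ) ^ 2) := by
  rw [thetaTerm, jacobiTheta₂_term, ← Complex.exp_add]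
  ring_nf

lemma summable_norm_thetaTerm {w : ℂ} (hw : 0 < w.im) (a : ℝ) :
    Summable fun n : ℤ => ‖thetaTerm w a n‖ := by
  have h := summable_norm_iff.mpr ((summable_jacobiTheta₂_term_iff (w * a) w).mpr hw)
  simpa only [thetaTerm_eq_jacobiTheta₂_term_mul, norm_mul] using
    h.mul_right ‖cexp (π * I * w * (a : ℂ) ^ 2)‖

lemma thetaTerm_mul_thetaTerm (w : ℂ) (a b : ℝ) (p q : ℤ) (ε : ℕ) :
    thetaTerm w a (q + p + ε) * thetaTerm w b (q - p) =
      thetaTerm (2 * w) ((a - b + ε) / 2) p * thetaTerm (2 * w) ((a + b + ε) / 2) q := by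
  simp only [thetaTerm, ← Complex.exp_add]
  push_cast
  ring_nf

def parityPairEquiv : Bool × ℤ × ℤ ≃ ℤ × ℤ where
  toFun x := (x.2.2 + x.2.1 + x.1.toNat, x.2.2 - x.2.1)
  invFun y := (decide ((y.1 + y.2) % 2 = 1),
    (y.1 - y.2 - (y.1 + y.2) % 2) / 2, (y.1 + y.2 - (y.1 + y.2) % 2) / 2)
  left_inv := by
    rintro ⟨_ | _, p, q⟩ <;>
      simp only [Prod.mk.injEq, Bool.toNat_false, Bool.toNat_true, Nat.cast_zero, Nat.cast_one,
        decide_eq_true_eq, decide_eq_false_iff_not] <;> omega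
  right_inv := by
    rintro ⟨m, n⟩
    rcases Int.emod_two_eq (m + n) with h | h <;>
      simp only [h, Prod.mk.injEq, decide_true, decide_false, zero_ne_one, Bool.toNat_false,
        Bool.toNat_true, Nat.cast_zero, Nat.cast_one] <;> omega

lemma tsum_int_prod_eq_sum_parity {α : Type*} [AddCommGroup α] [UniformSpace α]
    [IsUniformAddGroup α] [CompleteSpace α] [T0Space α] {f : ℤ × ℤ → α} (hf : Summable f) :
    ∑' z, f z = ∑ ε ∈ Finset.range 2, ∑' z : ℤ × ℤ, f (z.2 + z.1 + ε, z.2 - z.1) := by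
  have hf' : Summable fun x => f (parityPairEquiv x) := parityPairEquiv.summable_iff.mpr hf
  rw [← parityPairEquiv.tsum_eq, hf'.tsum_prod, tsum_bool, Finset.sum_range_succ,
    Finset.sum_range_one]
  rfl

lemma tsum_thetaTerm_mul_tsum_thetaTerm {w : ℂ} (hw : 0 < w.im) (a b : ℝ) :
    (∑' n : ℤ, thetaTerm w a n) * (∑' n : ℤ, thetaTerm w b n) =
      ∑ ε ∈ Finset.range 2, (∑' n : ℤ, thetaTerm (2 * w) ((a - b + ε) / 2) n) *
        (∑' n : ℤ, thetaTerm (2 * w) ((a + b + ε) / 2) n) := by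
  have hw₂ : 0 < (2 * w).im := by simp [hw]
  have hsummable : Summable fun z : ℤ × ℤ => thetaTerm w a z.1 * thetaTerm w b z.2 :=
    summable_mul_of_summable_norm (summable_norm_thetaTerm hw a) (summable_norm_thetaTerm hw b)
  rw [tsum_mul_tsum_of_summable_norm (summable_norm_thetaTerm hw a) (summable_norm_thetaTerm hw b),
    tsum_int_prod_eq_sum_parity hsummable]
  refine Finset.sum_congr rfl fun ε _ => ?_
  rw [tsum_mul_tsum_of_summable_norm (summable_norm_thetaTerm hw₂ _)
    (summable_norm_thetaTerm hw₂ _)]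
  exact tsum_congr fun z => thetaTerm_mul_thetaTerm w a b z.1 z.2 ε

/-- The classical quadratic theta addition identity:
`θ[i/3,0](3τ)·θ[j/3,0](3τ) = Σ_{m=0,1} θ[(i-j+3m)/6,0](6τ)·θ[(i+j+3m)/6,0](6τ)`. -/
theorem theta_addition (τ : ℂ) (hτ : 0 < τ.im) (i j : ℤ) :
    thetaConst τ ((i : ℝ) / 3) 3 * thetaConst τ ((j : ℝ) / 3) 3 =
      ∑ m ∈ Finset.range 2,
        thetaConst τ (((i : ℝ) - (j : ℝ) + 3 * (m : ℝ)) / 6) 6 *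
          thetaConst τ (((i : ℝ) + (j : ℝ) + 3 * (m : ℝ)) / 6) 6 := by
  have h3τ : 0 < ((3 : ℕ) * τ).im := by simpa using hτ
  simp only [thetaConst_eq_tsum_thetaTerm, tsum_thetaTerm_mul_tsum_thetaTerm h3τ]
  refine Finset.sum_congr rfl fun m _ => ?_
  have hw : (2 : ℂ) * ((3 : ℕ) * τ) = (6 : ℕ) * τ := by push_cast; ring
  have hdiff : ((i : ℝ) / 3 - j / 3 + m) / 2 = (i - j + 3 * m) / 6 := by ring
  have hsum : ((i : ℝ) / 3 + j / 3 + m) / 2 = (i + j + 3 * m) / 6 := by ring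
  rw [hw, hdiff, hsum]
end

section
/- In the quotient torus K = (ℝ⁴/ℤ⁴)/ι with ι the standard involution x ↦ -x, and ρ(x₁,y₁,x₂,y₂) = (x₁, y₁+2x₁, x₂, y₂+2x₂), the number of intersection points of L₀ = {y₁ = y₂ = 0} with ρᵏL₀ in K is: 4 = C(4,1) for k=1, 10 = C(5,2) for k=2, 20 = C(6,3) for k=3, and 34 = C(7,4) - 1 for k=4. -/
/-- The four-torus `ℝ⁴/ℤ⁴` with coordinates `(x₁, y₁, x₂, y₂)`. -/
abbrev Torus4 : Type :=
  AddCircle (1 : ℝ) × AddCircle (1 : ℝ) × AddCircle (1 : ℝ) × AddCircle (1 : ℝ)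

/-- The symplectomorphism `ρ(x₁,y₁,x₂,y₂) = (x₁, y₁+2x₁, x₂, y₂+2x₂)`. -/
noncomputable def rhoMap (p : Torus4) : Torus4 :=
  (p.1, p.2.1 + 2 • p.1, p.2.2.1, p.2.2.2 + 2 • p.2.2.1)

/-- The orbit equivalence of the standard involution `ι : x ↦ -x`. -/
def negSetoid : Setoid Torus4 where
  r p q := q = p ∨ q = -p
  iseqv := by
    refine ⟨fun x => Or.inl rfl, ?_, ?_⟩
    · rintro x y (rfl | rfl)
      · exact Or.inl rfl
      · exact Or.inr (neg_neg x).symm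
    · rintro x y z (rfl | rfl) (rfl | rfl) <;> simp [neg_neg]

/-- The Lagrangian `L₀ = {y₁ = y₂ = 0}` in the four-torus. -/
def Lzero : Set Torus4 := {p | p.2.1 = 0 ∧ p.2.2.2 = 0}

noncomputable def psi (n : ℕ) [NeZero n] : ZMod n →+ AddCircle (1 : ℝ) :=
  ZMod.lift n ⟨(zmultiplesHom _ (((n : ℝ)⁻¹ : ℝ) : AddCircle (1:ℝ))),
    by
      have hn : ((n : ℝ)) ≠ 0 := Nat.cast_ne_zero.mpr (NeZero.ne n)
      simp only [zmultiplesHom_apply, ← AddCircle.coe_zsmul]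
      rw [zsmul_eq_mul, Int.cast_natCast, mul_inv_cancel₀ hn]
      exact AddCircle.coe_period 1⟩

lemma psi_apply_nat (n : ℕ) [NeZero n] (m : ℕ) :
    psi n (m : ZMod n) = m • (((n : ℝ)⁻¹ : ℝ) : AddCircle (1:ℝ)) := by
  have : ((m : ℤ) : ZMod n) = (m : ZMod n) := by push_cast; ring
  rw [← this, psi, ZMod.lift_coe]
  simp

lemma psi_orderOf (n : ℕ) [NeZero n] :
    addOrderOf ((((n : ℝ)⁻¹ : ℝ)) : AddCircle (1:ℝ)) = n := by
  have := AddCircle.addOrderOf_period_div (p := (1:ℝ)) (n := n) (Nat.pos_of_ne_zero (NeZero.ne n))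
  rwa [one_div] at this

lemma psi_injective (n : ℕ) [NeZero n] : Function.Injective (psi n) := by
  rw [injective_iff_map_eq_zero]
  intro a ha
  have hv : a = ((a.val : ℕ) : ZMod n) := (ZMod.natCast_rightInverse a).symm
  rw [hv, psi_apply_nat] at ha
  have hdvd := addOrderOf_dvd_of_nsmul_eq_zero ha
  rw [psi_orderOf] at hdvd
  have h0 : a.val = 0 := Nat.eq_zero_of_dvd_of_lt hdvd a.val_lt
  rw [hv, h0, Nat.cast_zero]

lemma psi_range (n : ℕ) [NeZero n] (x : AddCircle (1:ℝ)) :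
    n • x = 0 ↔ ∃ a : ZMod n, psi n a = x := by
  constructor
  · intro hx
    have hnpos : 0 < n := Nat.pos_of_ne_zero (NeZero.ne n)
    have hfin : IsOfFinAddOrder x := by
      refine isOfFinAddOrder_iff_nsmul_eq_zero.mpr ⟨n, hnpos, hx⟩
    set d := addOrderOf x with hd
    have hdpos : 0 < d := hfin.addOrderOf_pos
    have hdvd : d ∣ n := addOrderOf_dvd_of_nsmul_eq_zero hx
    obtain ⟨m, _, _, he⟩ := AddCircle.exists_gcd_eq_one_of_isOfFinAddOrder (p := (1:ℝ)) hfin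
    refine ⟨((m * (n / d) : ℕ) : ZMod n), ?_⟩
    rw [psi_apply_nat, ← he]
    rw [← AddCircle.coe_nsmul]
    congr 1
    have hdR : ((d : ℝ)) ≠ 0 := Nat.cast_ne_zero.mpr hdpos.ne'
    have hnR : ((n : ℝ)) ≠ 0 := Nat.cast_ne_zero.mpr (NeZero.ne n)
    have hcast : (((n / d : ℕ)) : ℝ) = (n : ℝ) / (d : ℝ) := by
      rw [Nat.cast_div hdvd hdR]
    rw [nsmul_eq_mul]
    push_cast [hcast]
    field_simp
    rw [← hd, mul_div_cancel_right₀ _ hdR]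
  · rintro ⟨a, rfl⟩
    rw [← map_nsmul]
    convert map_zero (psi n)
    simp [ZMod.natCast_self]

/-- Negation setoid on pairs mod n. -/
def negPair (n : ℕ) : Setoid (ZMod n × ZMod n) where
  r p q := q = p ∨ q = -p
  iseqv := by
    refine ⟨fun x => Or.inl rfl, ?_, ?_⟩
    · rintro x y (rfl | rfl)
      · exact Or.inl rfl
      · exact Or.inr (neg_neg x).symm
    · rintro x y z (rfl | rfl) (rfl | rfl) <;> simp [neg_neg]

instance negPairFintype (n : ℕ) [NeZero n] : Fintype (Quotient (negPair n)) :=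
  @Quotient.fintype _ _ (negPair n) (fun p q => inferInstanceAs (Decidable (q = p ∨ q = -p)))

/-- Lattice points map. -/
noncomputable def latt (n : ℕ) [NeZero n] (p : ZMod n × ZMod n) : Torus4 :=
  (psi n p.1, 0, psi n p.2, 0)

lemma latt_neg (n : ℕ) [NeZero n] (p : ZMod n × ZMod n) : latt n (-p) = -(latt n p) := by
  simp [latt, map_neg]

lemma latt_injective (n : ℕ) [NeZero n] : Function.Injective (latt n) := by
  rintro ⟨a, b⟩ ⟨c, d⟩ h
  simp only [latt, Prod.mk.injEq] at h
  exact Prod.ext (psi_injective n h.1) (psi_injective n h.2.2.1)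

/-- The induced map on quotients. -/
noncomputable def lattQ (n : ℕ) [NeZero n] : Quotient (negPair n) → Quotient negSetoid :=
  Quotient.map' (latt n) (by
    rintro p q (rfl | rfl)
    · exact Or.inl rfl
    · exact Or.inr (latt_neg n p))

lemma lattQ_injective (n : ℕ) [NeZero n] : Function.Injective (lattQ n) := by
  intro x y
  induction x using Quotient.inductionOn'
  induction y using Quotient.inductionOn'
  rename_i p q
  intro h
  have h' : (negSetoid).r (latt n p) (latt n q) := Quotient.exact' h
  apply Quotient.sound'
  rcases h' with h' | h'
  · exact Or.inl (latt_injective n h')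
  · rw [← latt_neg] at h'
    exact Or.inr (latt_injective n h')

lemma rho_iter (k : ℕ) (p : Torus4) :
    rhoMap^[k] p = (p.1, p.2.1 + (2*k) • p.1, p.2.2.1, p.2.2.2 + (2*k) • p.2.2.1) := by
  induction k generalizing p with
  | zero => simp
  | succ k ih =>
    rw [Function.iterate_succ_apply', ih, rhoMap]
    simp only
    have h : ∀ x y : AddCircle (1:ℝ), y + (2*k) • x + 2 • x = y + (2*(k+1)) • x := fun x y => by
      rw [add_assoc, ← add_nsmul, mul_add, mul_one]
    exact Prod.ext rfl (Prod.ext (h _ _) (Prod.ext rfl (h _ _)))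

lemma mem_latt_range (n : ℕ) [NeZero n] (p : Torus4)
    (h1 : p.2.1 = 0) (h2 : p.2.2.2 = 0) (h3 : n • p.1 = 0) (h4 : n • p.2.2.1 = 0) :
    ∃ q : ZMod n × ZMod n, latt n q = p := by
  obtain ⟨a, ha⟩ := (psi_range n p.1).mp h3
  obtain ⟨b, hb⟩ := (psi_range n p.2.2.1).mp h4
  exact ⟨(a, b), by
    simp only [latt, ha, hb]
    exact Prod.ext rfl (Prod.ext h1.symm (Prod.ext rfl h2.symm))⟩

lemma inter_eq (k : ℕ) (hk : k ≠ 0) :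
    haveI : NeZero (2*k) := ⟨by omega⟩
    (Quotient.mk negSetoid '' Lzero) ∩ (Quotient.mk negSetoid '' (rhoMap^[k] '' Lzero))
      = Set.range (fun p => Quotient.mk negSetoid (latt (2*k) p)) := by
  haveI : NeZero (2*k) := ⟨by omega⟩
  ext q
  constructor
  · rintro ⟨⟨p, hp, rfl⟩, r, ⟨p', hp', rfl⟩, hq⟩
    have hrel : p = rhoMap^[k] p' ∨ p = -(rhoMap^[k] p') := Quotient.exact hq
    rw [rho_iter, hp'.1, hp'.2, zero_add, zero_add] at hrel
    have key : (2*k) • p.1 = 0 ∧ (2*k) • p.2.2.1 = 0 := by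
      obtain ⟨x, y, z, w⟩ := p
      have hy : y = 0 := hp.1
      have hw : w = 0 := hp.2
      rcases hrel with h | h
      · simp only [Prod.mk.injEq] at h
        obtain ⟨e1, e2, e3, e4⟩ := h
        exact ⟨by rw [e1, ← e2, hy], by rw [e3, ← e4, hw]⟩
      · rw [show -((p'.1, (2*k) • p'.1, p'.2.2.1, (2*k) • p'.2.2.1) : Torus4)
            = (-p'.1, -((2*k) • p'.1), -p'.2.2.1, -((2*k) • p'.2.2.1)) from rfl,
          Prod.mk.injEq, Prod.mk.injEq, Prod.mk.injEq] at h
        obtain ⟨e1, e2, e3, e4⟩ := h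
        constructor
        · rw [e1, smul_neg, ← e2, hy]
        · rw [e3, smul_neg, ← e4, hw]
    obtain ⟨qq, hqq⟩ := mem_latt_range (2*k) p hp.1 hp.2 key.1 key.2
    exact ⟨qq, congrArg _ hqq⟩
  · rintro ⟨⟨a, b⟩, rfl⟩
    have hsm : ∀ c : ZMod (2*k), (2*k) • psi (2*k) c = 0 := by
      intro c
      rw [← map_nsmul]
      convert map_zero (psi (2*k))
      simp [ZMod.natCast_self]
    constructor
    · exact ⟨latt (2*k) (a, b), ⟨rfl, rfl⟩, rfl⟩
    · refine ⟨latt (2*k) (a, b), ⟨latt (2*k) (a, b), ⟨rfl, rfl⟩, ?_⟩, rfl⟩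
      rw [rho_iter]
      simp only [latt, zero_add]
      rw [hsm a, hsm b]

lemma card_inter (k : ℕ) (hk : k ≠ 0) :
    haveI : NeZero (2*k) := ⟨by omega⟩
    Nat.card ↥((Quotient.mk negSetoid '' Lzero) ∩ (Quotient.mk negSetoid '' (rhoMap^[k] '' Lzero)))
      = Nat.card (Quotient (negPair (2*k))) := by
  haveI : NeZero (2*k) := ⟨by omega⟩
  rw [inter_eq k hk]
  have hc : (fun p => Quotient.mk negSetoid (latt (2*k) p))
      = lattQ (2*k) ∘ (Quotient.mk (negPair (2*k))) := rfl
  rw [hc, Set.range_comp]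
  have hu : Set.range (Quotient.mk (negPair (2*k))) = Set.univ :=
    Set.range_eq_univ.mpr Quotient.mk_surjective
  rw [hu, Set.image_univ]
  exact Nat.card_range_of_injective (lattQ_injective _)

/-- In the Kummer quotient `K = (ℝ⁴/ℤ⁴)/ι`, the number of intersection points
of `L₀` with `ρᵏL₀` is `4 = C(4,1)` for `k = 1`, `10 = C(5,2)` for `k = 2`,
`20 = C(6,3)` for `k = 3`, and `34 = C(7,4) - 1` for `k = 4`. -/
theorem kummer_intersection_counts :
    (Nat.card ↥((Quotient.mk negSetoid '' Lzero) ∩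
        (Quotient.mk negSetoid '' (rhoMap^[1] '' Lzero))) = Nat.choose 4 1) ∧
    (Nat.card ↥((Quotient.mk negSetoid '' Lzero) ∩
        (Quotient.mk negSetoid '' (rhoMap^[2] '' Lzero))) = Nat.choose 5 2) ∧
    (Nat.card ↥((Quotient.mk negSetoid '' Lzero) ∩
        (Quotient.mk negSetoid '' (rhoMap^[3] '' Lzero))) = Nat.choose 6 3) ∧
    (Nat.card ↥((Quotient.mk negSetoid '' Lzero) ∩
        (Quotient.mk negSetoid '' (rhoMap^[4] '' Lzero))) = Nat.choose 7 4 - 1) := by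
  refine ⟨?_, ?_, ?_, ?_⟩
  · rw [card_inter 1 one_ne_zero]
    show Nat.card (Quotient (negPair 2)) = _
    rw [Nat.card_eq_fintype_card]
    decide
  · rw [card_inter 2 two_ne_zero]
    show Nat.card (Quotient (negPair 4)) = _
    rw [Nat.card_eq_fintype_card]
    decide
  · rw [card_inter 3 three_ne_zero]
    show Nat.card (Quotient (negPair 6)) = _
    rw [Nat.card_eq_fintype_card]
    decide
  · rw [card_inter 4 four_ne_zero]
    show Nat.card (Quotient (negPair 8)) = _
    rw [Nat.card_eq_fintype_card]
    decide
end

section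
/- For τ in the upper half-plane, the theta constants a(j) = θ[j/4, 0](4τ, 0) = Σ_{n∈ℤ} exp(4πiτ(n+j/4)²) satisfy a(1) = a(3), and the Veronese-type quadric relation holds: with X₀X₃ and X₁X₂ both expanding via the product formula Σ_{i,j∈ℤ/2ℤ} a(c-a+2i)a(d-b+2j)·(basis element indexed by (a+c+2i, b+d+2j)), the coefficient vectors of X₀X₃ and X₁X₂ coincide, yielding X₀X₃ = X₁X₂. -/
open Complex Real

/-- The theta constant `a(j) = θ[j/4,0](4τ,0) = Σ_{n∈ℤ} exp(4πiτ(n+j/4)²)`. -/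
noncomputable def thetaA (τ : ℂ) (j : ℤ) : ℂ :=
  ∑' n : ℤ, Complex.exp (4 * (π : ℂ) * Complex.I * τ * ((n : ℂ) + (j : ℂ) / 4) ^ 2)

/-- The Fukaya product of the generators indexed by `(a,b), (c,d) ∈ (ℤ/2ℤ)²`,
as a coefficient vector on the basis indexed by `(ℤ/4ℤ)²`:
`X_{(a,b)} X_{(c,d)} = Σ_{i,j ∈ ℤ/2ℤ} a(c-a+2i) a(d-b+2j) Y_{(a+c+2i, b+d+2j)}`. -/
noncomputable def fukayaProd (τ : ℂ) (A C : ℤ × ℤ) : ZMod 4 × ZMod 4 → ℂ :=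
  fun w =>
    ∑ i ∈ Finset.range 2, ∑ j ∈ Finset.range 2,
      if w = (((A.1 + C.1 + 2 * (i : ℤ) : ℤ) : ZMod 4),
              ((A.2 + C.2 + 2 * (j : ℤ) : ℤ) : ZMod 4)) then
        thetaA τ (C.1 - A.1 + 2 * (i : ℤ)) * thetaA τ (C.2 - A.2 + 2 * (j : ℤ))
      else 0

/-! Reindexing the theta series by `n ↦ -n` and `n ↦ n + k` gives `a(-j) = a(j)` and
`a(j + 4k) = a(j)`, so all theta constants at odd indices equal `a(1)`. Every coefficient
in both `X₀X₃` and `X₁X₂` is a product of two such constants, sitting on the same four basis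
elements `(1 + 2i, 1 + 2j)`, so both products equal `a(1)²` times the sum of those four. -/

lemma thetaA_neg (τ : ℂ) (j : ℤ) : thetaA τ (-j) = thetaA τ j := by
  rw [thetaA, ← (Equiv.neg ℤ).tsum_eq]
  refine tsum_congr fun n => ?_
  push_cast [Equiv.neg_apply]
  ring_nf

lemma thetaA_add_four_mul (τ : ℂ) (j k : ℤ) : thetaA τ (j + 4 * k) = thetaA τ j := by
  rw [thetaA, ← (Equiv.subRight k).tsum_eq]
  refine tsum_congr fun n => ?_
  push_cast [Equiv.subRight_apply]
  ring_nf

lemma thetaA_of_odd (τ : ℂ) {j : ℤ} (hj : Odd j) : thetaA τ j = thetaA τ 1 := by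
  obtain ⟨k, rfl⟩ := hj
  obtain ⟨m, rfl | rfl⟩ := Int.even_or_odd' k
  · rw [← thetaA_add_four_mul τ 1 m]
    ring_nf
  · rw [← thetaA_neg τ 1, ← thetaA_add_four_mul τ (-1) (m + 1)]
    ring_nf

theorem veronese_quadric_general (τ : ℂ) :
    thetaA τ 1 = thetaA τ 3 ∧
    fukayaProd τ (0, 0) (1, 1) = fukayaProd τ (1, 0) (0, 1) := by
  refine ⟨(thetaA_of_odd τ (by decide)).symm, funext fun w => ?_⟩
  simp only [fukayaProd, Finset.sum_range_succ, Finset.sum_range_zero]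
  norm_num [thetaA_of_odd τ (j := 3) (by decide), thetaA_of_odd τ (j := -1) (by decide)]

/-- For `τ` in the upper half-plane, `a(1) = a(3)`, and the coefficient vectors
of the products `X₀X₃` and `X₁X₂` coincide, yielding the Veronese quadric
relation `X₀X₃ = X₁X₂` (with `X₀ = (0,0)`, `X₁ = (1,0)`, `X₂ = (0,1)`,
`X₃ = (1,1)`). -/
theorem veronese_quadric (τ : ℂ) (hτ : 0 < τ.im) :
    thetaA τ 1 = thetaA τ 3 ∧
    fukayaProd τ (0, 0) (1, 1) = fukayaProd τ (1, 0) (0, 1) :=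
  veronese_quadric_general τ
end
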